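/- Stability of the spatiotemporal single-linkage partition maps on objects: let γ_X, γ_Y be DMSs with d_dyn(γ_X, γ_Y) < ε/2, witnessed by an (ε/2)-tripod R with surjections φ_X : Z ↠ X, φ_Y : Z ↠ Y, and let f : X → Y satisfy: for every x there is z ∈ Z with φ_X(z)=x and φ_Y(z)=f(x). For (I,δ) ∈ Int × ℝ≥0 let ∼^X_{I,δ} denote the equivalence relation on X generated by {(x,x') : ⋁_I d_X(x,x') ≤ δ}, and similarly ∼^Y. Then f induces a well-defined surjective map from X/∼^X_{I,δ} to Y/∼^Y_{I^ε, δ+ε}, where I^ε is I widened by ε on both sides. -/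

import Mathlib

/-!
For every `s ∈ I` the tripod bounds `⋁ d_Y (f x, f x')` over `[s - ε/2, s + ε/2] ⊆ I^ε` by
`d_X(s)(x, x') + ε`; taking the infimum over `s` gives
`⋁_{I^ε} d_Y (f x, f x') ≤ ⋁_I d_X (x, x') + ε`, so `f` preserves the generating relations
and descends to the quotients. For surjectivity write `y = φ_Y z`: the tripod applied to a
witness `z'` of `f (φ_X z)` and to `z`, at time `u`, gives
`⋁_{I^ε} d_Y (f (φ_X z), y) ≤ d_X(u)(φ_X z, φ_X z) + ε = ε`.
-/

namespace Stmt11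

noncomputable def vee {X : Type} (d : ℝ → X → X → ℝ) (a b : ℝ) (x x' : X) : ℝ :=
  sInf ((fun s => d s x x') '' Set.Icc a b)

theorem Quot.map_surjective_of_forall_exists_rel {α β : Type*} {ra : α → α → Prop}
    {rb : β → β → Prop} {f : α → β} (h : ∀ ⦃a b : α⦄, ra a b → rb (f a) (f b))
    (hf : ∀ b, ∃ a, rb (f a) b) : (Quot.map f h).Surjective := by
  rintro ⟨b⟩
  obtain ⟨a, hab⟩ := hf b
  exact ⟨Quot.mk _ a, Quot.sound hab⟩

section vee

variable {X : Type} {d : ℝ → X → X → ℝ}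

theorem le_vee {a b c : ℝ} (hab : a ≤ b) {x x' : X} (h : ∀ s ∈ Set.Icc a b, c ≤ d s x x') :
    c ≤ vee d a b x x' :=
  le_csInf ⟨d a x x', a, ⟨le_rfl, hab⟩, rfl⟩ (by rintro _ ⟨s, hs, rfl⟩; exact h s hs)

theorem vee_anti (hnn : ∀ t x x', 0 ≤ d t x x') {a b c e : ℝ} (hca : c ≤ a) (hbe : b ≤ e)
    (hab : a ≤ b) (x x' : X) : vee d c e x x' ≤ vee d a b x x' :=
  csInf_le_csInf ⟨0, by rintro _ ⟨s, _, rfl⟩; exact hnn s x x'⟩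
    ⟨d a x x', a, ⟨le_rfl, hab⟩, rfl⟩ (Set.image_mono (Set.Icc_subset_Icc hca hbe))

end vee

section tripod

variable {X Y Z : Type} {dX : ℝ → X → X → ℝ} {dY : ℝ → Y → Y → ℝ} {ε : ℝ}
  {pX : Z → X} {pY : Z → Y}

theorem vee_le_of_tripod (hYnn : ∀ t y y', 0 ≤ dY t y y') (hε : 0 ≤ ε)
    (htripod : ∀ t z z', vee dY (t - ε / 2) (t + ε / 2) (pY z) (pY z') ≤
      dX t (pX z) (pX z') + ε)
    {a b s : ℝ} (has : a ≤ s - ε / 2) (hsb : s + ε / 2 ≤ b) (z z' : Z) :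
    vee dY a b (pY z) (pY z') ≤ dX s (pX z) (pX z') + ε :=
  (vee_anti hYnn has hsb (by linarith) _ _).trans (htripod s z z')

theorem vee_map_le_of_tripod (hYnn : ∀ t y y', 0 ≤ dY t y y') (hε : 0 ≤ ε)
    (htripod : ∀ t z z', vee dY (t - ε / 2) (t + ε / 2) (pY z) (pY z') ≤
      dX t (pX z) (pX z') + ε)
    {f : X → Y} (hf : ∀ x, ∃ z, pX z = x ∧ pY z = f x) {u u' : ℝ} (huu' : u ≤ u')
    (x x' : X) : vee dY (u - ε) (u' + ε) (f x) (f x') ≤ vee dX u u' x x' + ε := by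
  obtain ⟨z, rfl, hz⟩ := hf x
  obtain ⟨z', rfl, hz'⟩ := hf x'
  rw [← hz, ← hz', ← sub_le_iff_le_add]
  refine le_vee huu' fun s hs => ?_
  have := vee_le_of_tripod hYnn hε htripod (a := u - ε) (b := u' + ε) (s := s)
    (by linarith [hs.1]) (by linarith [hs.2]) z z'
  linarith

theorem exists_vee_map_le_of_tripod (hXrefl : ∀ t x, dX t x x = 0)
    (hYnn : ∀ t y y', 0 ≤ dY t y y') (hε : 0 ≤ ε)
    (htripod : ∀ t z z', vee dY (t - ε / 2) (t + ε / 2) (pY z) (pY z') ≤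
      dX t (pX z) (pX z') + ε)
    (hpY : pY.Surjective) {f : X → Y} (hf : ∀ x, ∃ z, pX z = x ∧ pY z = f x)
    {u u' : ℝ} (huu' : u ≤ u') (y : Y) : ∃ x, vee dY (u - ε) (u' + ε) (f x) y ≤ ε := by
  obtain ⟨z, rfl⟩ := hpY y
  obtain ⟨z', hz'X, hz'Y⟩ := hf (pX z)
  refine ⟨pX z, ?_⟩
  have := vee_le_of_tripod hYnn hε htripod (a := u - ε) (b := u' + ε) (s := u)
    (by linarith) (by linarith) z' z
  rwa [hz'Y, hz'X, hXrefl, zero_add] at this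

end tripod

theorem spatiotemporal_partition_map_welldefined_surjective
    {X Y Z : Type}
    (dX : ℝ → X → X → ℝ) (dY : ℝ → Y → Y → ℝ)
    (hXrefl : ∀ t x, dX t x x = 0)
    (hYnn : ∀ t y y', 0 ≤ dY t y y')
    (ε : ℝ) (hε : 0 ≤ ε)
    (pX : Z → X) (pY : Z → Y)
    (hpY : Function.Surjective pY)
    (htripod : ∀ t : ℝ, ∀ z z' : Z,
      vee dX (t - ε / 2) (t + ε / 2) (pX z) (pX z') ≤ dY t (pY z) (pY z') + ε ∧
      vee dY (t - ε / 2) (t + ε / 2) (pY z) (pY z') ≤ dX t (pX z) (pX z') + ε)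
    (f : X → Y) (hf : ∀ x : X, ∃ z : Z, pX z = x ∧ pY z = f x)
    (u u' : ℝ) (huu' : u ≤ u') (δ : ℝ) (hδ : 0 ≤ δ) :
    ∃ F : Quot (fun x x' : X => vee dX u u' x x' ≤ δ) →
          Quot (fun y y' : Y => vee dY (u - ε) (u' + ε) y y' ≤ δ + ε),
      (∀ x : X, F (Quot.mk _ x) = Quot.mk _ (f x)) ∧ Function.Surjective F := by
  have htripodY := fun t z z' => (htripod t z z').2
  have hrel : ∀ ⦃x x'⦄, vee dX u u' x x' ≤ δ → vee dY (u - ε) (u' + ε) (f x) (f x') ≤ δ + ε :=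
    fun x x' h => (vee_map_le_of_tripod hYnn hε htripodY hf huu' x x').trans (by linarith)
  refine ⟨Quot.map f hrel, fun _ => rfl,
    Quot.map_surjective_of_forall_exists_rel hrel fun y => ?_⟩
  obtain ⟨x, hx⟩ := exists_vee_map_le_of_tripod hXrefl hYnn hε htripodY hpY hf huu' y
  exact ⟨x, hx.trans (by linarith)⟩

end Stmt11
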